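/- arXiv:2311.05711 — 2 statements merged into one kernel-verified Lean document; each statement's English description precedes it below -/
import Mathlib

section
/- Generator of super dynamics from body dynamics: let Ω be a bilinear form on V ⊕ W given in block form by (ω, A; −Aᵀ, η) with η invertible on W, and suppose ρ₀ ∈ V satisfies ω̄(ρ₀) = 0 where ω̄ := ω − A η⁻¹ Aᵀ decomposes as ω₀ + ω̂ with ω̂ nilpotent (as an operator composed with a partial inverse ω₀⁻¹ of ω₀ on ker ρ₀). Then P = ρ + η⁻¹Aᵀρ with ρ = (Id + ω₀⁻¹ω̂)⁻¹ ρ₀ satisfies Ω(P, ·) = 0. -/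
/-- generator of super dynamics from body dynamics.
Linear-algebra model: `Ω` on `V ⊕ W` has blocks `(ω, A; −Aᵀ, η)` with `η`
symmetric invertible (inverse `ηinv`).  With `ω̂ := ω − ω₀ − A η⁻¹ Aᵀ` (so
`ω̄ := ω − A η⁻¹ Aᵀ = ω₀ + ω̂`), `ρ₀ ∈ ker ω₀`, `ω₀⁻¹` a partial inverse of
`ω₀` defined on the annihilator of `ρ₀`, `ω₀⁻¹ ∘ ω̂` nilpotent, and
`ρ = (Id + ω₀⁻¹ ω̂)⁻¹ ρ₀` (i.e. `ρ + ω₀⁻¹(ω̂ ρ) = ρ₀`), the supervector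
`P = ρ + η⁻¹ Aᵀ ρ` satisfies `Ω(P, ·) = 0` on every `(v', w') ∈ V ⊕ W`. -/
theorem super_generator_from_body
    (V W : Type*) [AddCommGroup V] [Module ℝ V] [AddCommGroup W] [Module ℝ W]
    (ω ω₀ : V →ₗ[ℝ] V →ₗ[ℝ] ℝ) (A : W →ₗ[ℝ] V →ₗ[ℝ] ℝ)
    (η : W →ₗ[ℝ] W →ₗ[ℝ] ℝ) (ηinv : (W →ₗ[ℝ] ℝ) →ₗ[ℝ] W)
    (hη1 : ∀ w, ηinv (η w) = w) (hη2 : ∀ φ, η (ηinv φ) = φ)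
    (hηsymm : ∀ w w', η w w' = η w' w)
    (hωskew : ∀ u v, ω u v = - ω v u)
    (hω₀skew : ∀ u v, ω₀ u v = - ω₀ v u)
    (ρ₀ : V) (hρ₀ne : ρ₀ ≠ 0) (h0 : ω₀ ρ₀ = 0)
    (ω₀inv : (V →ₗ[ℝ] ℝ) →ₗ[ℝ] V)
    (hpinv : ∀ φ : V →ₗ[ℝ] ℝ, φ ρ₀ = 0 → ω₀ (ω₀inv φ) = φ)
    (hann : ∀ v : V, ((ω - ω₀ - A ∘ₗ ηinv ∘ₗ A.flip) v) ρ₀ = 0)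
    (hnil : IsNilpotent (ω₀inv ∘ₗ (ω - ω₀ - A ∘ₗ ηinv ∘ₗ A.flip)))
    (ρ : V) (hρ : ρ + ω₀inv ((ω - ω₀ - A ∘ₗ ηinv ∘ₗ A.flip) ρ) = ρ₀) :
    ∀ (v' : V) (w' : W),
      ω ρ v' - A w' ρ - A (ηinv (A.flip ρ)) v' + η (ηinv (A.flip ρ)) w' = 0 := by
  intro v' w'
  set F := ω - ω₀ - A ∘ₗ ηinv ∘ₗ A.flip with hF
  have h1 : ω₀ (ω₀inv (F ρ)) = F ρ := hpinv _ (hann ρ)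
  have h3 : ω₀ ρ + F ρ = 0 := by
    have := congrArg ω₀ hρ
    rwa [map_add, h1, h0] at this
  have h6 : ω₀ ρ v' = - F ρ v' := by
    have := congrArg (fun φ : V →ₗ[ℝ] ℝ => φ v') h3
    simp only [LinearMap.add_apply, LinearMap.zero_apply] at this
    linarith
  have h5 : F ρ v' = ω ρ v' - ω₀ ρ v' - A (ηinv (A.flip ρ)) v' := by
    simp [hF, LinearMap.sub_apply]
  have h4 : η (ηinv (A.flip ρ)) w' = A w' ρ := by rw [hη2]; simp
  rw [h4]; linarith
end

section
/- Probability cone from indicator decomposition: for real ν₁, ν₂, ν₁₂ with ν₁² + ν₂² + ν₁₂² ≤ 1, there exist unique real p₁, p₂, p₃, p₄ with p₁+p₂+p₃+p₄ = 1, (1, ν₁, ν₂, ν₁₂) = p₁ψ₁ + p₂ψ₂ + p₃ψ₃ + p₄ψ₄ where ψ₁ = (1, √8, 0, 1), ψ₂ = (1, −√2, √6, 1), ψ₃ = (1, −√2, −√6, 1), ψ₄ = (1, 0, 0, −3), and each pᵢ ∈ [0, 1/2]; moreover the constraint 6(p₁−p₂)² + 2(p₁+p₂−2p₄)² + (4p₃−1)²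 ≤ 1 holds and is equivalent to ν₁²+ν₂²+ν₁₂² ≤ 1. -/
lemma bound_aux (p₁ p₂ p₃ p₄ : ℝ) (hsum : p₁ + p₂ + p₃ + p₄ = 1)
    (hq : 6 * (p₁ - p₂) ^ 2 + 2 * (p₁ + p₂ - 2 * p₄) ^ 2 + (4 * p₃ - 1) ^ 2 ≤ 1) :
    (p₁ ∈ Set.Icc (0:ℝ) (1/2) ∧ p₂ ∈ Set.Icc (0:ℝ) (1/2) ∧
      p₃ ∈ Set.Icc (0:ℝ) (1/2) ∧ p₄ ∈ Set.Icc (0:ℝ) (1/2)) := by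
  refine ⟨⟨?_, ?_⟩, ⟨?_, ?_⟩, ⟨?_, ?_⟩, ⟨?_, ?_⟩⟩ <;>
    nlinarith [sq_nonneg (3*(p₁-p₂) - 2*(p₁+p₂-2*p₄) + (4*p₃-1)),
      sq_nonneg (3*(p₁-p₂) + 2*(p₁+p₂-2*p₄) - (4*p₃-1)),
      sq_nonneg ((p₁+p₂-2*p₄) + (4*p₃-1)),
      sq_nonneg ((p₁+p₂-2*p₄) - 2*(4*p₃-1)),
      sq_nonneg (p₁-p₂), sq_nonneg (4*p₃-1)]

lemma quadric_eq (ν₁ ν₂ ν₁₂ p₁ p₂ p₃ p₄ : ℝ)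
    (hsum : p₁ + p₂ + p₃ + p₄ = 1)
    (h1 : ν₁ = Real.sqrt 8 * p₁ - Real.sqrt 2 * p₂ - Real.sqrt 2 * p₃)
    (h2 : ν₂ = Real.sqrt 6 * p₂ - Real.sqrt 6 * p₃)
    (h3 : ν₁₂ = p₁ + p₂ + p₃ - 3 * p₄) :
    6 * (p₁ - p₂) ^ 2 + 2 * (p₁ + p₂ - 2 * p₄) ^ 2 + (4 * p₃ - 1) ^ 2
      = ν₁ ^ 2 + ν₂ ^ 2 + ν₁₂ ^ 2 := by
  have h8 : Real.sqrt 8 = 2 * Real.sqrt 2 := by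
    rw [show (8:ℝ) = 2^2 * 2 by norm_num, Real.sqrt_mul (by positivity),
      Real.sqrt_sq (by norm_num)]
  have s2 : Real.sqrt 2 ^ 2 = 2 := Real.sq_sqrt (by norm_num)
  have s6 : Real.sqrt 6 ^ 2 = 6 := Real.sq_sqrt (by norm_num)
  have e1 : ν₁ ^ 2 = 2 * (2 * p₁ - p₂ - p₃) ^ 2 := by
    rw [h1, h8]; nlinarith [s2]
  have e2 : ν₂ ^ 2 = 6 * (p₂ - p₃) ^ 2 := by rw [h2]; nlinarith [s6]
  have e3 : ν₁₂ = 1 - 4 * p₄ := by rw [h3]; linarith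
  have hp4 : p₄ = 1 - p₁ - p₂ - p₃ := by linarith
  subst hp4
  rw [e1, e2, e3]; ring

/-- probability cone from indicator decomposition.
For `ν₁² + ν₂² + ν₁₂² ≤ 1` there exist unique `p₁,…,p₄` with
`(1, ν₁, ν₂, ν₁₂) = p₁ψ₁ + p₂ψ₂ + p₃ψ₃ + p₄ψ₄` (where
`ψ₁ = (1, √8, 0, 1)`, `ψ₂ = (1, −√2, √6, 1)`, `ψ₃ = (1, −√2, −√6, 1)`,
`ψ₄ = (1, 0, 0, −3)`) and `p₁+p₂+p₃+p₄ = 1`; each `pᵢ ∈ [0, 1/2]` and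
`6(p₁−p₂)² + 2(p₁+p₂−2p₄)² + (4p₃−1)² ≤ 1` holds.  Moreover, for any solution
of the linear system, this quadric inequality is equivalent to
`ν₁² + ν₂² + ν₁₂² ≤ 1`. -/
theorem probability_cone_indicator_decomposition (ν₁ ν₂ ν₁₂ : ℝ) :
    (ν₁ ^ 2 + ν₂ ^ 2 + ν₁₂ ^ 2 ≤ 1 →
      ∃! p : ℝ × ℝ × ℝ × ℝ,
        (p.1 + p.2.1 + p.2.2.1 + p.2.2.2 = 1 ∧
          ν₁ = Real.sqrt 8 * p.1 - Real.sqrt 2 * p.2.1 - Real.sqrt 2 * p.2.2.1 ∧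
          ν₂ = Real.sqrt 6 * p.2.1 - Real.sqrt 6 * p.2.2.1 ∧
          ν₁₂ = p.1 + p.2.1 + p.2.2.1 - 3 * p.2.2.2) ∧
        (p.1 ∈ Set.Icc (0:ℝ) (1/2) ∧ p.2.1 ∈ Set.Icc (0:ℝ) (1/2) ∧
          p.2.2.1 ∈ Set.Icc (0:ℝ) (1/2) ∧ p.2.2.2 ∈ Set.Icc (0:ℝ) (1/2)) ∧
        6 * (p.1 - p.2.1) ^ 2 + 2 * (p.1 + p.2.1 - 2 * p.2.2.2) ^ 2
          + (4 * p.2.2.1 - 1) ^ 2 ≤ 1) ∧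
    (∀ p₁ p₂ p₃ p₄ : ℝ,
      (p₁ + p₂ + p₃ + p₄ = 1 ∧
        ν₁ = Real.sqrt 8 * p₁ - Real.sqrt 2 * p₂ - Real.sqrt 2 * p₃ ∧
        ν₂ = Real.sqrt 6 * p₂ - Real.sqrt 6 * p₃ ∧
        ν₁₂ = p₁ + p₂ + p₃ - 3 * p₄) →
      (6 * (p₁ - p₂) ^ 2 + 2 * (p₁ + p₂ - 2 * p₄) ^ 2 + (4 * p₃ - 1) ^ 2 ≤ 1 ↔
        ν₁ ^ 2 + ν₂ ^ 2 + ν₁₂ ^ 2 ≤ 1)) := by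
  have h8 : Real.sqrt 8 = 2 * Real.sqrt 2 := by
    rw [show (8:ℝ) = 2^2 * 2 by norm_num, Real.sqrt_mul (by positivity),
      Real.sqrt_sq (by norm_num)]
  have s2pos : (0:ℝ) < Real.sqrt 2 := Real.sqrt_pos.mpr (by norm_num)
  have s6pos : (0:ℝ) < Real.sqrt 6 := Real.sqrt_pos.mpr (by norm_num)
  have s2 : Real.sqrt 2 ^ 2 = 2 := Real.sq_sqrt (by norm_num)
  have s6 : Real.sqrt 6 ^ 2 = 6 := Real.sq_sqrt (by norm_num)
  constructor
  · intro hν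
    set a := Real.sqrt 2
    set b := Real.sqrt 6
    set P₁ : ℝ := ν₁ / (3 * a) + (ν₁₂ + 3) / 12 with hP₁
    set T : ℝ := (ν₁₂ + 3) / 4 - P₁ with hT
    set P₂ : ℝ := (T + ν₂ / b) / 2 with hP₂
    set P₃ : ℝ := (T - ν₂ / b) / 2 with hP₃
    set P₄ : ℝ := (1 - ν₁₂) / 4 with hP₄
    have hsum : P₁ + P₂ + P₃ + P₄ = 1 := by
      rw [hP₂, hP₃, hT, hP₄]; ring
    have h1 : ν₁ = Real.sqrt 8 * P₁ - a * P₂ - a * P₃ := by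
      rw [h8, hP₂, hP₃, hT, hP₁]
      field_simp
      ring
    have h2 : ν₂ = b * P₂ - b * P₃ := by
      rw [hP₂, hP₃]; field_simp; ring
    have h3 : ν₁₂ = P₁ + P₂ + P₃ - 3 * P₄ := by
      rw [hP₂, hP₃, hT, hP₄]; ring
    have hq : 6 * (P₁ - P₂) ^ 2 + 2 * (P₁ + P₂ - 2 * P₄) ^ 2 + (4 * P₃ - 1) ^ 2 ≤ 1 := by
      rw [quadric_eq ν₁ ν₂ ν₁₂ P₁ P₂ P₃ P₄ hsum h1 h2 h3]; exact hν
    refine ⟨(P₁, P₂, P₃, P₄), ⟨⟨hsum, h1, h2, h3⟩, bound_aux _ _ _ _ hsum hq, hq⟩, ?_⟩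
    rintro ⟨q₁, q₂, q₃, q₄⟩ ⟨⟨qs, q1, q2, q3⟩, -, -⟩
    simp only [Prod.mk.injEq]
    -- solve the linear system
    have e4 : q₄ = P₄ := by rw [hP₄, q3]; linarith
    have key : 3 * a * q₁ = ν₁ + a * ((ν₁₂ + 3) / 4) := by
      rw [q1, q3, h8]; linear_combination (3 * a / 4) * qs
    have e1 : q₁ = P₁ := by
      rw [hP₁]
      have ha : a ≠ 0 := ne_of_gt s2pos
      field_simp
      linear_combination 12 * key
    have e23 : q₂ + q₃ = T := by rw [hT, ← e1]; linarith [q3, qs]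
    have ed : q₂ - q₃ = ν₂ / b := by
      have hb : b ≠ 0 := ne_of_gt s6pos
      field_simp
      linear_combination -q2
    have e2 : q₂ = P₂ := by rw [hP₂]; linarith [e23, ed]
    have e3 : q₃ = P₃ := by rw [hP₃]; linarith [e23, ed]
    exact ⟨e1, e2, e3, e4⟩
  · rintro p₁ p₂ p₃ p₄ ⟨hsum, h1, h2, h3⟩
    rw [quadric_eq ν₁ ν₂ ν₁₂ p₁ p₂ p₃ p₄ hsum h1 h2 h3]
end
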